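/- Let γ : ℝ → ℝ³ be a non-degenerate C² curve on S² and let f_z (for z ∈ ℝ³) be the associated projection maps. There is a constant C(γ), depending only on γ, such that for every δ > 0 and all z, z' ∈ ℝ³ with |z| ≤ 1/2, |z'| ≤ 1/2 and z ≠ z', one has L³( f_z^δ([0,1]) ∩ f_{z'}^δ([0,1]) ) ≤ C(γ) · δ³ / |z − z'|, where f^δ([0,1]) := {(θ, y) ∈ [0,1] × ℝ² : |y − f(θ)| < δ} and L³ is Lebesgue measure on ℝ³. -/

import Mathlib

open MeasureTheory Set
open scoped ENNReal NNReal

/-- The cross product on `ℝ³ = EuclideanSpace ℝ (Fin 3)`. -/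
noncomputable def cross3 (a b : EuclideanSpace ℝ (Fin 3)) : EuclideanSpace ℝ (Fin 3) :=
  (EuclideanSpace.equiv (Fin 3) ℝ).symm
    ![a 1 * b 2 - a 2 * b 1, a 2 * b 0 - a 0 * b 2, a 0 * b 1 - a 1 * b 0]

/-- For a curve `γ` on `S²`, normalisation constant `M`, and `z ∈ ℝ³`, the projection map
`f_z(θ) = (⟨z, γ'(θ)/M⟩, ⟨z, ν(θ)⟩)` where `ν(θ) = γ(θ) × γ'(θ)/|γ'(θ)|`. -/
noncomputable def fmap (γ : ℝ → EuclideanSpace ℝ (Fin 3)) (M : ℝ)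
    (z : EuclideanSpace ℝ (Fin 3)) (θ : ℝ) : EuclideanSpace ℝ (Fin 2) :=
  (EuclideanSpace.equiv (Fin 2) ℝ).symm
    ![(inner ℝ z (M⁻¹ • deriv γ θ) : ℝ),
      (inner ℝ z ((‖deriv γ θ‖)⁻¹ • cross3 (γ θ) (deriv γ θ)) : ℝ)]

/-- The vertical `δ`-neighbourhood of the graph of `f : ℝ → ℝ²` over `[0,1]`. -/
def vertNbhd1 (f : ℝ → EuclideanSpace ℝ (Fin 2)) (δ : ℝ) :
    Set (ℝ × EuclideanSpace ℝ (Fin 2)) :=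
  {p | p.1 ∈ Icc (0:ℝ) 1 ∧ ‖p.2 - f p.1‖ < δ}

/-!
Write `w = z - z'`. Since `f_z` is linear in `z`, every point `(θ, y)` of the intersection has
`|f_w(θ)| < 2δ`, so by Fubini the intersection has measure at most `πδ²` times the measure of
the sublevel set `{θ : |f_u(θ)| < 2δ/|w|}`, where `u = w/|w|`.

For a unit vector `u` the numbers `⟨u, γ'⟩`, `⟨u, γ × γ'⟩`, `⟨u, γ''⟩` never vanish together:
the first two vanishing forces `u ∥ γ`, while `⟨γ, γ''⟩ = -|γ'|² ≠ 0`. By compactness their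
absolute values add up to at least some `c > 0`. On `{|f_u| < ε}` with `ε` small the first two
are `O(ε)`, so `g = ⟨u, γ'⟩` is `O(ε)` there while `|g'| = |⟨u, γ''⟩| ≥ c/2`. By the mean value
theorem such a sublevel set meets each interval on which `g'` oscillates by at most `c/4` in a
set of diameter `O(ε)`, and uniform continuity of `γ''` bounds the number of intervals needed.
-/

open scoped RealInnerProductSpace Matrix

local notation "E3" => EuclideanSpace ℝ (Fin 3)
local notation "E2" => EuclideanSpace ℝ (Fin 2)

lemma cross3_eq_crossProduct (a b : E3) :
    cross3 a b = WithLp.toLp 2 (a.ofLp ⨯₃ b.ofLp) := rfl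

lemma real_inner_eq_dotProduct {ι : Type*} [Fintype ι] (x y : EuclideanSpace ℝ ι) :
    ⟪x, y⟫ = x.ofLp ⬝ᵥ y.ofLp := by
  rw [EuclideanSpace.inner_eq_star_dotProduct, star_trivial, dotProduct_comm]

@[fun_prop]
lemma Continuous.cross3 {α : Type*} [TopologicalSpace α] {f g : α → E3} (hf : Continuous f)
    (hg : Continuous g) : Continuous fun x ↦ cross3 (f x) (g x) := by
  unfold _root_.cross3; fun_prop

lemma eq_inner_smul_of_inner_eq_zero {a b u : E3} (ha : ‖a‖ = 1) (hab : ⟪a, b⟫ = 0)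
    (hb : b ≠ 0) (hub : ⟪u, b⟫ = 0) (huab : ⟪u, cross3 a b⟫ = 0) : u = ⟪a, u⟫ • a := by
  have haa : ⟪a, a⟫ = 1 := by rw [real_inner_self_eq_norm_sq, ha, one_pow]
  have hbb : ⟪b, b⟫ ≠ 0 := by simpa using hb
  rw [cross3_eq_crossProduct] at huab
  simp only [real_inner_eq_dotProduct] at *
  have h₁ : b.ofLp ⨯₃ (a.ofLp ⨯₃ b.ofLp) = (b.ofLp ⬝ᵥ b.ofLp) • a.ofLp := by
    rw [cross_cross_eq_smul_sub_smul', hab, zero_smul, sub_zero]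
  have h₂ : u.ofLp ⨯₃ a.ofLp = 0 := by
    have := cross_cross_eq_smul_sub_smul' u.ofLp b.ofLp (a.ofLp ⨯₃ b.ofLp)
    rw [h₁, map_smul, huab, dotProduct_comm b.ofLp u.ofLp, hub, zero_smul, zero_smul,
      sub_zero, smul_eq_zero] at this
    exact this.resolve_left hbb
  have h₃ := cross_cross_eq_smul_sub_smul' a.ofLp u.ofLp a.ofLp
  rw [h₂, map_zero, haa, one_smul, eq_comm, sub_eq_zero, dotProduct_comm u.ofLp] at h₃
  ext i
  simpa using congrFun h₃ i

lemma HasDerivAt.eq_zero_of_eqOn_Icc {f : ℝ → ℝ} {f' a b x c : ℝ} (hab : a < b)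
    (hx : x ∈ Icc a b) (hf : HasDerivAt f f' x) (hc : EqOn f (fun _ ↦ c) (Icc a b)) :
    f' = 0 :=
  (uniqueDiffOn_Icc hab x hx).eq_deriv _ hf.hasDerivWithinAt
    ((hasDerivWithinAt_const x _ c).congr hc (hc hx))

lemma mul_abs_sub_le_abs_sub_of_le_abs_deriv {g g' : ℝ → ℝ} {s t c : ℝ}
    (hg : ∀ x ∈ uIcc s t, HasDerivAt g (g' x) x) (hg' : ∀ x ∈ uIcc s t, c ≤ |g' x|) :
    c * |t - s| ≤ |g t - g s| := by
  wlog hst : s < t generalizing s t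
  · rcases (not_lt.1 hst).eq_or_lt with rfl | hts
    · simp
    · rw [abs_sub_comm, abs_sub_comm (g t)]
      exact this (uIcc_comm s t ▸ hg) (uIcc_comm s t ▸ hg') hts
  have hcont : ContinuousOn g (Icc s t) := fun x hx ↦
    (hg x (Icc_subset_uIcc hx)).continuousAt.continuousWithinAt
  obtain ⟨ξ, hξ, hslope⟩ := exists_hasDerivAt_eq_slope g g' hst hcont fun x hx ↦
    hg x (Icc_subset_uIcc (Ioo_subset_Icc_self hx))
  have hpos : 0 < t - s := sub_pos.2 hst
  rw [eq_div_iff hpos.ne'] at hslope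
  rw [← hslope, abs_mul, abs_of_pos hpos]
  exact mul_le_mul_of_nonneg_right (hg' ξ (Icc_subset_uIcc (Ioo_subset_Icc_self hξ))) hpos.le

lemma Icc_subset_biUnion_Icc {a b η : ℝ} (hη : 0 < η) :
    Icc a b ⊆ ⋃ j ∈ Finset.range (⌊(b - a) / η⌋₊ + 1), Icc (a + j * η) (a + (j + 1) * η) := by
  intro θ hθ
  have hnonneg : 0 ≤ (θ - a) / η := div_nonneg (sub_nonneg.2 hθ.1) hη.le
  simp only [mem_iUnion, Finset.mem_range, exists_prop]
  refine ⟨⌊(θ - a) / η⌋₊, Nat.lt_succ_of_le (Nat.floor_le_floor (by gcongr; exact hθ.2)),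
    ?_, ?_⟩
  · have := Nat.floor_le hnonneg
    rw [le_div_iff₀ hη] at this
    linarith
  · have := Nat.lt_floor_add_one ((θ - a) / η)
    rw [div_lt_iff₀ hη] at this
    linarith

section Sublevel

variable {g g' : ℝ → ℝ} {a b c η K : ℝ}

lemma abs_sub_le_of_mem_sublevel (hc : 0 < c) (hg : ∀ x ∈ Icc a b, HasDerivAt g (g' x) x)
    (hosc : ∀ s ∈ Icc a b, ∀ t ∈ Icc a b, |s - t| ≤ η → |g' s - g' t| ≤ c / 2)
    {s t : ℝ} (hs : s ∈ {θ ∈ Icc a b | |g θ| ≤ K ∧ c ≤ |g' θ|})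
    (ht : t ∈ {θ ∈ Icc a b | |g θ| ≤ K ∧ c ≤ |g' θ|}) (hst : |s - t| ≤ η) :
    |s - t| ≤ 4 * K / c := by
  have hsub : uIcc s t ⊆ Icc a b := uIcc_subset_Icc hs.1 ht.1
  have hbig : ∀ x ∈ uIcc s t, c / 2 ≤ |g' x| := fun x hx ↦ by
    have hxs : |x - s| ≤ η := (abs_sub_left_of_mem_uIcc hx).trans (by rwa [abs_sub_comm])
    have := hosc x (hsub hx) s hs.1 hxs
    linarith [abs_sub_abs_le_abs_sub (g' s) (g' x), abs_sub_comm (g' x) (g' s), hs.2.2]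
  have key := mul_abs_sub_le_abs_sub_of_le_abs_deriv (fun x hx ↦ hg x (hsub hx)) hbig
  rw [le_div_iff₀ hc, abs_sub_comm]
  linarith [abs_sub (g t) (g s), abs_neg (g s), ht.2.1, hs.2.1]

lemma volume_sublevel_le (hc : 0 < c) (hη : 0 < η) (hg : ∀ x ∈ Icc a b, HasDerivAt g (g' x) x)
    (hosc : ∀ s ∈ Icc a b, ∀ t ∈ Icc a b, |s - t| ≤ η → |g' s - g' t| ≤ c / 2) :
    volume {θ ∈ Icc a b | |g θ| ≤ K ∧ c ≤ |g' θ|} ≤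
      ENNReal.ofReal ((⌊(b - a) / η⌋₊ + 1) * (4 * K / c)) := by
  set S := {θ ∈ Icc a b | |g θ| ≤ K ∧ c ≤ |g' θ|}
  set N := ⌊(b - a) / η⌋₊ + 1
  have hpiece : ∀ j : ℕ, volume (S ∩ Icc (a + j * η) (a + (j + 1) * η)) ≤
      ENNReal.ofReal (4 * K / c) := fun j ↦ by
    refine (Real.volume_le_diam _).trans (Metric.ediam_le fun s hs t ht ↦ ?_)
    rw [edist_dist, Real.dist_eq]
    refine ENNReal.ofReal_le_ofReal (abs_sub_le_of_mem_sublevel hc hg hosc hs.1 ht.1 ?_)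
    rw [abs_sub_le_iff]
    constructor <;> linarith [hs.2.1, hs.2.2, ht.2.1, ht.2.2]
  have hcover : S ⊆ ⋃ j ∈ Finset.range N, S ∩ Icc (a + j * η) (a + (j + 1) * η) := by
    intro θ hθ
    have := Icc_subset_biUnion_Icc hη hθ.1
    simp only [mem_iUnion] at this ⊢
    obtain ⟨j, hj, hθj⟩ := this
    exact ⟨j, hj, hθ, hθj⟩
  calc volume S ≤ ∑ j ∈ Finset.range N, volume (S ∩ Icc (a + j * η) (a + (j + 1) * η)) :=
        (measure_mono hcover).trans (measure_biUnion_finset_le _ _)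
    _ ≤ ∑ j ∈ Finset.range N, ENNReal.ofReal (4 * K / c) := Finset.sum_le_sum fun j _ ↦ hpiece j
    _ = ENNReal.ofReal (N * (4 * K / c)) := by
        rw [Finset.sum_const, Finset.card_range, nsmul_eq_mul,
          ENNReal.ofReal_mul (Nat.cast_nonneg N), ENNReal.ofReal_natCast]
    _ = ENNReal.ofReal ((⌊(b - a) / η⌋₊ + 1) * (4 * K / c)) := by
        simp only [N, Nat.cast_add, Nat.cast_one]

end Sublevel

section Curve

variable {γ : ℝ → E3} {a b : ℝ}

lemma inner_deriv_eq_zero (hγ : Differentiable ℝ γ) (hab : a < b)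
    (hsphere : ∀ θ ∈ Icc a b, ‖γ θ‖ = 1) {θ : ℝ} (hθ : θ ∈ Icc a b) :
    ⟪γ θ, deriv γ θ⟫ = 0 := by
  have h := ((hγ θ).hasDerivAt.inner ℝ (hγ θ).hasDerivAt).eq_zero_of_eqOn_Icc hab hθ
    (c := 1) fun t ht ↦ by simp [hsphere t ht]
  linarith [real_inner_comm (deriv γ θ) (γ θ)]

lemma inner_deriv_deriv_eq (hγ : ContDiff ℝ 2 γ) (hab : a < b)
    (hsphere : ∀ θ ∈ Icc a b, ‖γ θ‖ = 1) {θ : ℝ} (hθ : θ ∈ Icc a b) :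
    ⟪γ θ, deriv (deriv γ) θ⟫ = -‖deriv γ θ‖ ^ 2 := by
  have hγ₁ : Differentiable ℝ γ := hγ.differentiable two_ne_zero
  have h := ((hγ₁ θ).hasDerivAt.inner ℝ (hγ.differentiable_deriv_two θ).hasDerivAt
    ).eq_zero_of_eqOn_Icc hab hθ (c := 0) fun t ht ↦ inner_deriv_eq_zero hγ₁ hab hsphere ht
  rw [real_inner_self_eq_norm_sq] at h
  linarith

lemma sum_abs_inner_pos (hγ : ContDiff ℝ 2 γ) (hab : a < b)
    (hsphere : ∀ θ ∈ Icc a b, ‖γ θ‖ = 1) {θ : ℝ} (hθ : θ ∈ Icc a b) (hγ' : deriv γ θ ≠ 0)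
    {u : E3} (hu : u ≠ 0) :
    0 < |⟪u, deriv γ θ⟫| + |⟪u, cross3 (γ θ) (deriv γ θ)⟫| + |⟪u, deriv (deriv γ) θ⟫| := by
  by_contra! h
  obtain ⟨h₁, h₂, h₃⟩ : ⟪u, deriv γ θ⟫ = 0 ∧ ⟪u, cross3 (γ θ) (deriv γ θ)⟫ = 0 ∧
      ⟪u, deriv (deriv γ) θ⟫ = 0 := by
    simp only [← abs_nonpos_iff]
    refine ⟨?_, ?_, ?_⟩ <;> linarith [abs_nonneg ⟪u, deriv γ θ⟫,
      abs_nonneg ⟪u, cross3 (γ θ) (deriv γ θ)⟫, abs_nonneg ⟪u, deriv (deriv γ) θ⟫]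
  have hu_eq := eq_inner_smul_of_inner_eq_zero (hsphere θ hθ)
    (inner_deriv_eq_zero (hγ.differentiable two_ne_zero) hab hsphere hθ) hγ' h₁ h₂
  rw [hu_eq, real_inner_smul_left, inner_deriv_deriv_eq hγ hab hsphere hθ, mul_eq_zero,
    neg_eq_zero, pow_eq_zero_iff two_ne_zero, norm_eq_zero] at h₃
  exact hu (hu_eq.trans (by rw [h₃.resolve_right hγ', zero_smul]))

lemma exists_pos_le_sum_abs_inner (hγ : ContDiff ℝ 2 γ) (hab : a < b)
    (hsphere : ∀ θ ∈ Icc a b, ‖γ θ‖ = 1) (hγ' : ∀ θ ∈ Icc a b, deriv γ θ ≠ 0) :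
    ∃ c > 0, ∀ u : E3, ‖u‖ = 1 → ∀ θ ∈ Icc a b,
      c ≤ |⟪u, deriv γ θ⟫| + |⟪u, cross3 (γ θ) (deriv γ θ)⟫| + |⟪u, deriv (deriv γ) θ⟫| := by
  have hγc : Continuous γ := hγ.continuous
  have hγ'c : Continuous (deriv γ) := hγ.continuous_deriv one_le_two
  obtain ⟨c, hc, hle⟩ := ((isCompact_sphere (0 : E3) 1).prod isCompact_Icc).exists_forall_le'
    (f := fun p : E3 × ℝ ↦ |⟪p.1, deriv γ p.2⟫| + |⟪p.1, cross3 (γ p.2) (deriv γ p.2)⟫| +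
      |⟪p.1, deriv (deriv γ) p.2⟫|) (by fun_prop : Continuous _).continuousOn fun p hp ↦
    sum_abs_inner_pos hγ hab hsphere hp.2 (hγ' p.2 hp.2) (ne_zero_of_mem_unit_sphere ⟨p.1, hp.1⟩)
  exact ⟨c, hc, fun u hu θ hθ ↦ hle (u, θ) ⟨mem_sphere_zero_iff_norm.2 hu, hθ⟩⟩

lemma exists_pos_abs_inner_deriv_deriv_sub_le (hγ : ContDiff ℝ 2 γ) {ε : ℝ} (hε : 0 < ε) :
    ∃ η > 0, ∀ u : E3, ‖u‖ = 1 → ∀ s ∈ Icc a b, ∀ t ∈ Icc a b, |s - t| ≤ η →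
      |⟪u, deriv (deriv γ) s⟫ - ⟪u, deriv (deriv γ) t⟫| ≤ ε := by
  have hγ''c : Continuous (deriv (deriv γ)) := by fun_prop
  obtain ⟨η, hη, hunif⟩ := Metric.uniformContinuousOn_iff_le.1
    (isCompact_Icc.uniformContinuousOn_of_continuous hγ''c.continuousOn) ε hε
  refine ⟨η, hη, fun u hu s hs t ht hst ↦ ?_⟩
  rw [← inner_sub_right]
  refine (abs_real_inner_le_norm _ _).trans ?_
  rw [hu, one_mul, ← dist_eq_norm]
  exact hunif s hs t ht (by rwa [Real.dist_eq])

end Curve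

section Fmap

variable {γ : ℝ → E3} {M : ℝ}

lemma fmap_apply_zero (z : E3) (θ : ℝ) : fmap γ M z θ 0 = M⁻¹ * ⟪z, deriv γ θ⟫ := by
  simp [fmap, real_inner_smul_right]

lemma fmap_apply_one (z : E3) (θ : ℝ) :
    fmap γ M z θ 1 = ‖deriv γ θ‖⁻¹ * ⟪z, cross3 (γ θ) (deriv γ θ)⟫ := by
  simp [fmap, real_inner_smul_right]

lemma fmap_sub (z z' : E3) (θ : ℝ) : fmap γ M (z - z') θ = fmap γ M z θ - fmap γ M z' θ := by
  ext i; fin_cases i <;> simp [fmap, inner_sub_left]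

lemma fmap_smul (r : ℝ) (z : E3) (θ : ℝ) : fmap γ M (r • z) θ = r • fmap γ M z θ := by
  ext i; fin_cases i <;> simp [fmap, real_inner_smul_left]

lemma measurable_fmap (hγ : Continuous γ) (z : E3) : Measurable (fmap γ M z) := by
  have := measurable_deriv γ
  unfold fmap
  fun_prop

lemma abs_inner_le_of_norm_fmap_le (hM : 0 < M) {θ ε : ℝ} (hγθ : ‖deriv γ θ‖ ≤ M)
    (hγ'θ : deriv γ θ ≠ 0) {u : E3} (hu : ‖fmap γ M u θ‖ ≤ ε) :
    |⟪u, deriv γ θ⟫| ≤ M * ε ∧ |⟪u, cross3 (γ θ) (deriv γ θ)⟫| ≤ M * ε := by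
  have h₀ := (PiLp.norm_apply_le (fmap γ M u θ) 0).trans hu
  have h₁ := (PiLp.norm_apply_le (fmap γ M u θ) 1).trans hu
  have hpos : 0 < ‖deriv γ θ‖ := norm_pos_iff.2 hγ'θ
  rw [fmap_apply_zero, Real.norm_eq_abs, abs_mul, abs_inv, abs_of_pos hM,
    inv_mul_le_iff₀ hM] at h₀
  rw [fmap_apply_one, Real.norm_eq_abs, abs_mul, abs_inv, abs_norm,
    inv_mul_le_iff₀ hpos] at h₁
  have hε : 0 ≤ ε := (norm_nonneg _).trans hu
  exact ⟨h₀, h₁.trans (mul_le_mul_of_nonneg_right hγθ hε)⟩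

lemma setOf_norm_fmap_lt_subset {a b c ε : ℝ} (hM : 0 < M)
    (hle : ∀ θ ∈ Icc a b, ‖deriv γ θ‖ ≤ M) (hγ' : ∀ θ ∈ Icc a b, deriv γ θ ≠ 0) {u : E3}
    (hsum : ∀ θ ∈ Icc a b,
      c ≤ |⟪u, deriv γ θ⟫| + |⟪u, cross3 (γ θ) (deriv γ θ)⟫| + |⟪u, deriv (deriv γ) θ⟫|)
    (hε : 4 * M * ε < c) :
    {θ ∈ Icc a b | ‖fmap γ M u θ‖ < ε} ⊆
      {θ ∈ Icc a b | |⟪u, deriv γ θ⟫| ≤ M * ε ∧ c / 2 ≤ |⟪u, deriv (deriv γ) θ⟫|} := by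
  rintro θ ⟨hθ, hfθ⟩
  obtain ⟨h₀, h₁⟩ := abs_inner_le_of_norm_fmap_le hM (hle θ hθ) (hγ' θ hθ) hfθ.le
  exact ⟨hθ, h₀, by linarith [hsum θ hθ]⟩

lemma exists_volume_norm_fmap_lt_le {a b : ℝ} (hγ : ContDiff ℝ 2 γ) (hab : a < b)
    (hsphere : ∀ θ ∈ Icc a b, ‖γ θ‖ = 1) (hγ' : ∀ θ ∈ Icc a b, deriv γ θ ≠ 0)
    (hM : IsGreatest ((fun θ ↦ ‖deriv γ θ‖) '' Icc a b) M) :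
    ∃ A > 0, ∀ u : E3, ‖u‖ = 1 → ∀ ε > 0,
      volume {θ ∈ Icc a b | ‖fmap γ M u θ‖ < ε} ≤ ENNReal.ofReal (A * ε) := by
  have hle : ∀ θ ∈ Icc a b, ‖deriv γ θ‖ ≤ M := fun θ hθ ↦ hM.2 ⟨θ, hθ, rfl⟩
  have ha : a ∈ Icc a b := ⟨le_rfl, hab.le⟩
  have hMpos : 0 < M := (norm_pos_iff.2 (hγ' a ha)).trans_le (hle a ha)
  obtain ⟨c, hc, hsum⟩ := exists_pos_le_sum_abs_inner hγ hab hsphere hγ'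
  obtain ⟨η, hη, hosc⟩ := exists_pos_abs_inner_deriv_deriv_sub_le (a := a) (b := b) hγ
    (by positivity : 0 < c / 2 / 2)
  set N : ℕ := ⌊(b - a) / η⌋₊
  refine ⟨(N + 1) * (8 * M / c) + (b - a) * (4 * M / c), by positivity, fun u hu ε hε ↦ ?_⟩
  by_cases hlarge : c ≤ 4 * M * ε
  · calc volume {θ ∈ Icc a b | ‖fmap γ M u θ‖ < ε} ≤ ENNReal.ofReal (b - a) := by
          rw [← Real.volume_Icc]; exact measure_mono fun θ hθ ↦ hθ.1
      _ ≤ _ := by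
          refine ENNReal.ofReal_le_ofReal ?_
          have h₁ : 1 ≤ 4 * M / c * ε := by rw [div_mul_eq_mul_div, le_div_iff₀ hc]; linarith
          have h₂ : 0 ≤ (N + 1) * (8 * M / c) * ε := by positivity
          nlinarith
  have hderiv : ∀ θ ∈ Icc a b, HasDerivAt (fun t ↦ ⟪u, deriv γ t⟫) ⟪u, deriv (deriv γ) θ⟫ θ :=
    fun θ _ ↦ by
      simpa using (hasDerivAt_const θ u).inner ℝ (hγ.differentiable_deriv_two θ).hasDerivAt
  calc volume {θ ∈ Icc a b | ‖fmap γ M u θ‖ < ε}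
      ≤ ENNReal.ofReal ((N + 1) * (4 * (M * ε) / (c / 2))) :=
        (measure_mono (setOf_norm_fmap_lt_subset hMpos hle hγ' (hsum u hu)
          (not_le.1 hlarge))).trans (volume_sublevel_le (by positivity) hη hderiv (hosc u hu))
    _ ≤ _ := by
        refine ENNReal.ofReal_le_ofReal ?_
        rw [show 4 * (M * ε) / (c / 2) = 8 * M / c * ε by field_simp; ring]
        linarith [mul_nonneg (mul_nonneg (sub_nonneg.2 hab.le) (by positivity : 0 ≤ 4 * M / c))
          hε.le]

end Fmap

lemma MeasureTheory.Measure.prod_setOf_mem_and_sub_mem {α E : Type*} [MeasurableSpace α]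
    [AddGroup E] [MeasurableSpace E] [MeasurableAdd E] [MeasurableSub₂ E] (μ : Measure α)
    (ν : Measure E) [SFinite μ] [SFinite ν] [ν.IsAddRightInvariant] {f : α → E}
    (hf : Measurable f) {S : Set α} (hS : MeasurableSet S) {B : Set E} (hB : MeasurableSet B) :
    μ.prod ν {p | p.1 ∈ S ∧ p.2 - f p.1 ∈ B} = μ S * ν B := by
  have hshear : MeasurePreserving (fun p : α × E ↦ (id p.1, p.2 - f p.1)) (μ.prod ν) (μ.prod ν) :=
    (MeasurePreserving.id μ).skew_product (measurable_snd.sub (hf.comp measurable_fst))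
      (.of_forall fun a ↦ map_sub_right_eq_self ν (f a))
  rw [← Measure.prod_prod, ← hshear.measure_preimage (hS.prod hB).nullMeasurableSet]
  rfl

lemma volume_vertNbhd1_inter_le {f f' : ℝ → E2} (hf : Measurable f) (hf' : Measurable f')
    (δ : ℝ) : volume (vertNbhd1 f δ ∩ vertNbhd1 f' δ) ≤
      volume {θ ∈ Icc (0 : ℝ) 1 | ‖f θ - f' θ‖ < 2 * δ} * volume (Metric.ball (0 : E2) δ) := by
  have hS : MeasurableSet {θ ∈ Icc (0 : ℝ) 1 | ‖f θ - f' θ‖ < 2 * δ} :=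
    measurableSet_Icc.inter (measurableSet_lt (hf.sub hf').norm measurable_const)
  rw [← Measure.prod_setOf_mem_and_sub_mem volume volume hf hS Metric.isOpen_ball.measurableSet]
  refine measure_mono ?_
  rintro ⟨θ, y⟩ ⟨⟨hθ, hy⟩, -, hy'⟩
  refine ⟨⟨hθ, ?_⟩, mem_ball_zero_iff.2 hy⟩
  calc ‖f θ - f' θ‖ ≤ ‖f θ - y‖ + ‖y - f' θ‖ := norm_sub_le_norm_sub_add_norm_sub ..
    _ < 2 * δ := by rw [norm_sub_rev]; linarith

/-- For a non-degenerate C² curve `γ` on `S²`, there is a constant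
`C(γ)` such that for all `δ > 0` and all distinct `z, z'` in the ball of radius `1/2`,
`L³(f_z^δ([0,1]) ∩ f_{z'}^δ([0,1])) ≤ C(γ) δ³ / |z − z'|`. -/
theorem stmt9 (γ : ℝ → EuclideanSpace ℝ (Fin 3))
    (hγ : ContDiff ℝ 2 γ)
    (hsphere : ∀ θ ∈ Icc (0:ℝ) 1, ‖γ θ‖ = 1)
    (hnondeg : ∀ θ ∈ Icc (0:ℝ) 1,
      LinearIndependent ℝ ![γ θ, deriv γ θ, deriv (deriv γ) θ])
    (M : ℝ) (hM : IsGreatest ((fun θ => ‖deriv γ θ‖) '' Icc (0:ℝ) 1) M) :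
    ∃ C : ℝ, 0 < C ∧
      ∀ δ : ℝ, 0 < δ →
        ∀ z z' : EuclideanSpace ℝ (Fin 3), ‖z‖ ≤ 1/2 → ‖z'‖ ≤ 1/2 → z ≠ z' →
          volume (vertNbhd1 (fmap γ M z) δ ∩ vertNbhd1 (fmap γ M z') δ)
            ≤ ENNReal.ofReal (C * δ ^ 3 / ‖z - z'‖) := by
  have hγ' : ∀ θ ∈ Icc (0 : ℝ) 1, deriv γ θ ≠ 0 := fun θ hθ ↦ by
    simpa using (hnondeg θ hθ).ne_zero 1
  obtain ⟨A, hA, hsublevel⟩ := exists_volume_norm_fmap_lt_le hγ zero_lt_one hsphere hγ' hM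
  refine ⟨2 * A * Real.pi, by positivity, fun δ hδ z z' _ _ hne ↦ ?_⟩
  have hw : z - z' ≠ 0 := sub_ne_zero.2 hne
  have hw_pos : 0 < ‖z - z'‖ := norm_pos_iff.2 hw
  have hS : {θ ∈ Icc (0 : ℝ) 1 | ‖fmap γ M z θ - fmap γ M z' θ‖ < 2 * δ} =
      {θ ∈ Icc (0 : ℝ) 1 | ‖fmap γ M (‖z - z'‖⁻¹ • (z - z')) θ‖ < 2 * δ / ‖z - z'‖} := by
    refine Set.ext fun θ ↦ and_congr_right fun _ ↦ ?_
    rw [fmap_smul, norm_smul, norm_inv, norm_norm, lt_div_iff₀ hw_pos, inv_mul_eq_div,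
      div_mul_cancel₀ _ hw_pos.ne', fmap_sub]
  calc volume (vertNbhd1 (fmap γ M z) δ ∩ vertNbhd1 (fmap γ M z') δ)
      ≤ _ := volume_vertNbhd1_inter_le (measurable_fmap hγ.continuous z)
        (measurable_fmap hγ.continuous z') δ
    _ ≤ ENNReal.ofReal (A * (2 * δ / ‖z - z'‖)) *
          (ENNReal.ofReal δ ^ 2 * ENNReal.ofReal Real.pi) := by
        rw [hS, EuclideanSpace.volume_ball_fin_two]
        gcongr
        exact hsublevel _ (norm_smul_inv_norm hw) _ (by positivity)
    _ = ENNReal.ofReal (2 * A * Real.pi * δ ^ 3 / ‖z - z'‖) := by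
        rw [← ENNReal.ofReal_pow hδ.le, ← ENNReal.ofReal_mul (by positivity),
          ← ENNReal.ofReal_mul (by positivity)]
        congr 1
        ring
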